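/- arXiv:1811.00572 — 2 statements merged into one kernel-verified Lean document; each statement's English description precedes it below -/
import Mathlib

section
/- Let U, V be as above, W ∈ ℝ^{n×q} have orthonormal columns spanning the null space of (C − I)ᵀ, P_W = WWᵀ. Then the map Z ↦ (P_U Z P_V + (I_m − P_U) Z P_V + P_U Z (I_n − P_V)) P_W is an idempotent linear map on ℝ^{m×n}, and its image is contained in { ξ ∈ ℝ^{m×n} : ξ(C − I) = 0 }. -/
/-!
Write `A = P_U`, `B = P_V`, `P = P_W`; these are idempotent, and the map is
`Z ↦ (Z B + A Z - A Z B) P`. The columns of `V` lie in `ker (C - I)ᵀ = col W`, so `P B = B`,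
and by symmetry `B P = B`; these relations and idempotency make the map a projection. Its image
is killed by `C - I` because `Wᵀ (C - I) = 0`, i.e. `P (C - I) = 0`.
-/

open Matrix

namespace Matrix

variable {m n k l p : Type*} [Fintype k] {R : Type*} [Semiring R]

theorem isIdempotentElem_mul_transpose [Fintype m] [DecidableEq k] {U : Matrix m k R}
    (hU : Uᵀ * U = 1) : IsIdempotentElem (U * Uᵀ) := by
  rw [IsIdempotentElem, Matrix.mul_assoc, ← Matrix.mul_assoc Uᵀ, hU, Matrix.one_mul]

theorem mul_transpose_mul_of_mul_eq [Fintype n] [DecidableEq k] {W : Matrix n k R}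
    (hW : Wᵀ * W = 1) {V : Matrix n p R} {Y : Matrix k p R} (hV : W * Y = V) :
    W * Wᵀ * V = V := by
  rw [← hV, Matrix.mul_assoc, ← Matrix.mul_assoc Wᵀ, hW, Matrix.one_mul]

theorem transpose_mul_apply (A : Matrix l k R) (B : Matrix k p R) (j : p) :
    (A * B)ᵀ j = A *ᵥ Bᵀ j :=
  rfl

theorem mul_eq_zero_iff_forall_mulVec_transpose_apply {M : Matrix l k R} {V : Matrix k p R} :
    M * V = 0 ↔ ∀ j, M *ᵥ Vᵀ j = 0 := by
  rw [← transpose_eq_zero]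
  exact funext_iff

theorem exists_mul_eq_iff_forall_exists_mulVec_eq {W : Matrix n k R} {V : Matrix n p R} :
    (∃ Y : Matrix k p R, W * Y = V) ↔ ∀ j, ∃ y, W *ᵥ y = Vᵀ j := by
  refine ⟨fun ⟨Y, hY⟩ j => ⟨Yᵀ j, by rw [← hY, transpose_mul_apply]⟩, fun h => ?_⟩
  choose y hy using h
  exact ⟨(of y)ᵀ, transpose_inj.mp (funext hy)⟩

theorem mul_eq_zero_iff_exists_mul_eq [Fintype n] {M : Matrix l n R} {W : Matrix n k R}
    (hker : ∀ x, M *ᵥ x = 0 ↔ ∃ y, W *ᵥ y = x) {V : Matrix n p R} :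
    M * V = 0 ↔ ∃ Y : Matrix k p R, W * Y = V := by
  simp only [mul_eq_zero_iff_forall_mulVec_transpose_apply, hker,
    exists_mul_eq_iff_forall_exists_mulVec_eq]

end Matrix

section TangentProjection

variable {m n : Type*} [Fintype m] [Fintype n] [DecidableEq m] [DecidableEq n]
  {R : Type*} [CommRing R]

def tangentProjection (A : Matrix m m R) (B P : Matrix n n R) (Z : Matrix m n R) :
    Matrix m n R :=
  (A * Z * B + (1 - A) * Z * B + A * Z * (1 - B)) * P

theorem isLinearMap_tangentProjection (A : Matrix m m R) (B P : Matrix n n R) :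
    IsLinearMap R (tangentProjection A B P) where
  map_add X Y := by
    simp only [tangentProjection, Matrix.mul_add, Matrix.add_mul]
    abel_nf
  map_smul c X := by
    simp only [tangentProjection, Matrix.mul_smul, Matrix.smul_mul, Matrix.add_mul, smul_add]

theorem tangentProjection_eq (A : Matrix m m R) (B P : Matrix n n R) (Z : Matrix m n R) :
    tangentProjection A B P Z = (Z * B + A * Z - A * Z * B) * P := by
  rw [tangentProjection]
  congr 1
  simp only [Matrix.sub_mul, Matrix.mul_sub, Matrix.one_mul, Matrix.mul_one]
  abel_nf

theorem tangentProjection_tangentProjection {A : Matrix m m R} {B P : Matrix n n R}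
    (hA : IsIdempotentElem A) (hB : IsIdempotentElem B) (hP : IsIdempotentElem P)
    (hPB : P * B = B) (hBP : B * P = B) (Z : Matrix m n R) :
    tangentProjection A B P (tangentProjection A B P Z) = tangentProjection A B P Z := by
  set Y := tangentProjection A B P Z with hY
  have hYB : Y * B = Z * B := by
    rw [hY, tangentProjection_eq, Matrix.mul_assoc, hPB]
    simp only [Matrix.sub_mul, Matrix.add_mul, Matrix.mul_assoc, hB.eq]
    rw [add_sub_cancel_right]
  have hAY : A * Y = A * Z * P := by
    rw [hY, tangentProjection_eq]
    simp only [Matrix.mul_sub, Matrix.mul_add, ← Matrix.mul_assoc, hA.eq]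
    rw [add_sub_cancel_left]
  rw [tangentProjection_eq, Matrix.mul_assoc A Y, hYB, ← Matrix.mul_assoc, hAY, hY,
    tangentProjection_eq]
  simp only [Matrix.sub_mul, Matrix.add_mul, Matrix.mul_assoc, hBP, hP.eq]

theorem tangentProjection_mul_eq_zero {A : Matrix m m R} {B P : Matrix n n R} {l : Type*}
    {D : Matrix n l R} (hPD : P * D = 0) (Z : Matrix m n R) :
    tangentProjection A B P Z * D = 0 := by
  rw [tangentProjection, Matrix.mul_assoc, hPD, Matrix.mul_zero]

end TangentProjection

/-- The map `Z ↦ (P_U Z P_V + (I − P_U) Z P_V + P_U Z (I − P_V)) P_W` is an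
idempotent linear map on `ℝ^{m×n}` whose image consists of matrices `ξ` with
`ξ (C − I) = 0`. -/
theorem tangent_projection_selfExpressive (m n r q : ℕ)
    (U : Matrix (Fin m) (Fin r) ℝ) (V : Matrix (Fin n) (Fin r) ℝ)
    (W : Matrix (Fin n) (Fin q) ℝ) (C : Matrix (Fin n) (Fin n) ℝ)
    (hU : Uᵀ * U = 1) (hV : Vᵀ * V = 1) (hW : Wᵀ * W = 1)
    -- the columns of `W` span the null space of `(C − I)ᵀ`
    (hWnull : ∀ x : Fin n → ℝ, (C - 1)ᵀ.mulVec x = 0 ↔ ∃ y : Fin q → ℝ, W.mulVec y = x)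
    -- the column space of `V` lies in the null space of `(C − I)ᵀ`
    (hVnull : (C - 1)ᵀ * V = 0) :
    IsLinearMap ℝ (fun Z : Matrix (Fin m) (Fin n) ℝ =>
        (U * Uᵀ * Z * (V * Vᵀ) + (1 - U * Uᵀ) * Z * (V * Vᵀ)
          + U * Uᵀ * Z * (1 - V * Vᵀ)) * (W * Wᵀ)) ∧
    (∀ Z : Matrix (Fin m) (Fin n) ℝ,
      (fun Z : Matrix (Fin m) (Fin n) ℝ =>
        (U * Uᵀ * Z * (V * Vᵀ) + (1 - U * Uᵀ) * Z * (V * Vᵀ)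
          + U * Uᵀ * Z * (1 - V * Vᵀ)) * (W * Wᵀ))
      ((U * Uᵀ * Z * (V * Vᵀ) + (1 - U * Uᵀ) * Z * (V * Vᵀ)
          + U * Uᵀ * Z * (1 - V * Vᵀ)) * (W * Wᵀ))
        = (U * Uᵀ * Z * (V * Vᵀ) + (1 - U * Uᵀ) * Z * (V * Vᵀ)
          + U * Uᵀ * Z * (1 - V * Vᵀ)) * (W * Wᵀ)) ∧
    (∀ Z : Matrix (Fin m) (Fin n) ℝ,
      ((U * Uᵀ * Z * (V * Vᵀ) + (1 - U * Uᵀ) * Z * (V * Vᵀ)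
          + U * Uᵀ * Z * (1 - V * Vᵀ)) * (W * Wᵀ)) * (C - 1) = 0) := by
  obtain ⟨Y, hY⟩ := (mul_eq_zero_iff_exists_mul_eq hWnull).mp hVnull
  have hPB : W * Wᵀ * (V * Vᵀ) = V * Vᵀ := by
    rw [← Matrix.mul_assoc, mul_transpose_mul_of_mul_eq hW hY]
  have hBP : V * Vᵀ * (W * Wᵀ) = V * Vᵀ := by
    simpa only [transpose_mul, transpose_transpose, Matrix.mul_assoc] using congrArg transpose hPB
  have hWC : Wᵀ * (C - 1) = 0 := by
    simpa only [transpose_mul, transpose_transpose, transpose_zero] using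
      congrArg transpose ((mul_eq_zero_iff_exists_mul_eq hWnull).mpr ⟨1, W.mul_one⟩)
  have hPC : W * Wᵀ * (C - 1) = 0 := by rw [Matrix.mul_assoc, hWC, Matrix.mul_zero]
  exact ⟨isLinearMap_tangentProjection _ _ _,
    tangentProjection_tangentProjection (isIdempotentElem_mul_transpose hU)
      (isIdempotentElem_mul_transpose hV) (isIdempotentElem_mul_transpose hW) hPB hBP,
    tangentProjection_mul_eq_zero hPC⟩
end

section
/- For any X ∈ ℝ^{m×n} of rank r, min { (‖L‖_F² + ‖R‖_F²)/2 : L ∈ ℝ^{m×r}, R ∈ ℝ^{n×r}, X = LRᵀ } = ‖X‖_*, the nuclear norm of X (sum of singular values). -/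
/-!
Writing `X = U D Vᵀ`, the balanced factors `L = U √D`, `R = V √D` attain `tr D`. Conversely, for
any factorization `X = L Rᵀ` the compressions `A = Uᵀ L`, `B = Vᵀ R` satisfy `A Bᵀ = D`, so
`tr D = tr (A Bᵀ) ≤ (‖A‖_F² + ‖B‖_F²) / 2` by AM-GM (`‖A - B‖_F² ≥ 0`), and compressing by a matrix
with orthonormal columns does not increase the Frobenius norm.
-/

open Matrix

namespace Matrix

variable {ι κ μ R : Type*} [Fintype ι] [Fintype κ]
variable [CommRing R]

theorem transpose_mul_self_mul_left [DecidableEq κ] {U : Matrix ι κ R} (hU : Uᵀ * U = 1)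
    (S : Matrix κ μ R) :
    (U * S)ᵀ * (U * S) = Sᵀ * S := by
  rw [transpose_mul, Matrix.mul_assoc, ← Matrix.mul_assoc Uᵀ, hU, Matrix.one_mul]

variable [LinearOrder R] [IsStrictOrderedRing R]

theorem trace_transpose_mul_self_nonneg (M : Matrix ι κ R) : 0 ≤ (Mᵀ * M).trace :=
  Finset.sum_nonneg fun _ _ => Finset.sum_nonneg fun _ _ => mul_self_nonneg _

theorem two_mul_trace_mul_transpose_le (A B : Matrix ι κ R) :
    2 * (A * Bᵀ).trace ≤ (Aᵀ * A).trace + (Bᵀ * B).trace := by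
  have hAB : (Aᵀ * B).trace = (A * Bᵀ).trace := by
    rw [← trace_transpose, transpose_mul, transpose_transpose, trace_mul_comm]
  have hBA : (Bᵀ * A).trace = (A * Bᵀ).trace := trace_mul_comm _ _
  have := trace_transpose_mul_self_nonneg (A - B)
  rw [transpose_sub, Matrix.sub_mul, Matrix.mul_sub, Matrix.mul_sub, trace_sub, trace_sub,
    trace_sub, hAB, hBA] at this
  linarith

theorem trace_transpose_mul_self_compress_le [Fintype μ] [DecidableEq κ] {U : Matrix ι κ R}
    (hU : Uᵀ * U = 1) (L : Matrix ι μ R) :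
    ((Uᵀ * L)ᵀ * (Uᵀ * L)).trace ≤ (Lᵀ * L).trace := by
  set S := Uᵀ * L
  have hLUS : Lᵀ * (U * S) = Sᵀ * S := by
    rw [← Matrix.mul_assoc, ← transpose_transpose U, ← transpose_mul]
  have hUSL : (U * S)ᵀ * L = Sᵀ * S := by rw [transpose_mul, Matrix.mul_assoc]
  -- `L - U S` is the component of `L` orthogonal to the columns of `U`
  have hresidual : (L - U * S)ᵀ * (L - U * S) = Lᵀ * L - Sᵀ * S := by
    rw [transpose_sub, Matrix.sub_mul, Matrix.mul_sub, Matrix.mul_sub,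
      transpose_mul_self_mul_left hU, hLUS, hUSL]
    abel
  have := trace_transpose_mul_self_nonneg (L - U * S)
  rw [hresidual, trace_sub] at this
  linarith

end Matrix

theorem Matrix.IsDiag.diagonal_sqrt_mul_self {ι : Type*} [Fintype ι] [DecidableEq ι]
    {D : Matrix ι ι ℝ} (hD : D.IsDiag) (hpos : ∀ i, 0 ≤ D i i) :
    diagonal (fun i => √(D i i)) * diagonal (fun i => √(D i i)) = D := by
  rw [diagonal_mul_diagonal]
  simp_rw [Real.mul_self_sqrt (hpos _)]
  exact hD.diagonal_diag

theorem factorization_min_eq_nuclearNorm_general (m n r : ℕ)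
    (X : Matrix (Fin m) (Fin n) ℝ)
    (U : Matrix (Fin m) (Fin r) ℝ) (V : Matrix (Fin n) (Fin r) ℝ)
    (D : Matrix (Fin r) (Fin r) ℝ)
    (hU : Uᵀ * U = 1) (hV : Vᵀ * V = 1)
    (hdiag : ∀ i j, i ≠ j → D i j = 0) (hpos : ∀ i, 0 ≤ D i i)
    (hSVD : X = U * D * Vᵀ) :
    IsLeast {t : ℝ | ∃ (L : Matrix (Fin m) (Fin r) ℝ) (R : Matrix (Fin n) (Fin r) ℝ),
        X = L * Rᵀ ∧ t = ((Lᵀ * L).trace + (Rᵀ * R).trace) / 2}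
      D.trace := by
  set S := diagonal fun i => √(D i i)
  have hSS : S * S = D := IsDiag.diagonal_sqrt_mul_self hdiag hpos
  have hSt : Sᵀ = S := diagonal_transpose _
  refine ⟨⟨U * S, V * S, ?_, ?_⟩, ?_⟩
  · rw [hSVD, transpose_mul, hSt, ← hSS]
    simp only [Matrix.mul_assoc]
  · rw [transpose_mul_self_mul_left hU, transpose_mul_self_mul_left hV, hSt, hSS]
    ring
  · rintro t ⟨L, R, hX, rfl⟩
    have hcompress : (Uᵀ * L) * (Vᵀ * R)ᵀ = D :=
      calc (Uᵀ * L) * (Vᵀ * R)ᵀ = Uᵀ * X * V := by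
            simp only [hX, transpose_mul, transpose_transpose, Matrix.mul_assoc]
        _ = (Uᵀ * U) * D * (Vᵀ * V) := by simp only [hSVD, Matrix.mul_assoc]
        _ = D := by rw [hU, hV, Matrix.one_mul, Matrix.mul_one]
    linarith [two_mul_trace_mul_transpose_le (Uᵀ * L) (Vᵀ * R),
      trace_transpose_mul_self_compress_le hU L, trace_transpose_mul_self_compress_le hV R,
      congrArg trace hcompress]

/-- For `X` of rank `r` with thin SVD `X = U D Vᵀ` (orthonormal columns, `D`
diagonal with nonnegative diagonal), the minimum of `(‖L‖_F² + ‖R‖_F²)/2` over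
all factorizations `X = L Rᵀ` with `L ∈ ℝ^{m×r}`, `R ∈ ℝ^{n×r}` equals the
nuclear norm `‖X‖_* = tr D` (the sum of the singular values of `X`). -/
theorem factorization_min_eq_nuclearNorm (m n r : ℕ)
    (X : Matrix (Fin m) (Fin n) ℝ) (hrank : X.rank = r)
    (U : Matrix (Fin m) (Fin r) ℝ) (V : Matrix (Fin n) (Fin r) ℝ)
    (D : Matrix (Fin r) (Fin r) ℝ)
    (hU : Uᵀ * U = 1) (hV : Vᵀ * V = 1)
    (hdiag : ∀ i j, i ≠ j → D i j = 0) (hpos : ∀ i, 0 ≤ D i i)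
    (hSVD : X = U * D * Vᵀ) :
    IsLeast {t : ℝ | ∃ (L : Matrix (Fin m) (Fin r) ℝ) (R : Matrix (Fin n) (Fin r) ℝ),
        X = L * Rᵀ ∧ t = ((Lᵀ * L).trace + (Rᵀ * R).trace) / 2}
      D.trace :=
  factorization_min_eq_nuclearNorm_general m n r X U V D hU hV hdiag hpos hSVD
end
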